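/- arXiv:quant-ph/0403109 — 2 statements merged into one kernel-verified Lean document; each statement's English description precedes it below -/
import Mathlib

section
/- For every p with 2 ≤ p < ∞ there are constants c_0, c_1 > 0 such that for all integers n, M, N with 1 ≤ n ≤ c_0·min(M,N), every randomized algorithm using n function values for computing the mean S_N on B_∞^N(L_p^M) (with outputs in L_p^M, error measured in the L_p^M norm) has worst-case expected error at least c_1 · n^{−1/2}. -/
/-!
Bakhvalov's averaging argument. Take the inputs `f j = (σ j, …, σ j)` with signs `σ j = ±1`
drawn independently with `P(σ j = 1) = 1/2 + δ` or `1/2 - δ`, each alternative with probability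
`1/2`, where `δ = (160 n)^(-1/2)`. Averaging over the `M` coordinates reduces the `L_p^M` error
to the error in estimating the mean of the signs, which is `±2δ` up to fluctuations of order
`N^(-1/2) ≤ δ/2`. An algorithm sees at most `n` signs, on which the two product laws have
χ²-divergence `(1 + O(δ²))^n - 1 ≤ 1/4`, hence total variation at most `1/2`: it cannot tell
`+2δ` from `-2δ`, and so errs by `δ/2` on average.
-/

/-- The normalized `L_p^M` norm on `ℝ^M`: `‖x‖ = ((1/M) ∑ i, |x i|^p)^(1/p)`. -/
noncomputable def lpNorm (p : ℝ) (M : ℕ) (x : Fin M → ℝ) : ℝ :=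
  ((M : ℝ)⁻¹ * ∑ i, |x i| ^ p) ^ (1 / p)

namespace MeanLowerBound

open Finset

def boolSign (b : Bool) : ℝ := if b then 1 else -1

@[simp] lemma boolSign_true : boolSign true = 1 := rfl

@[simp] lemma boolSign_false : boolSign false = -1 := rfl

lemma abs_boolSign (b : Bool) : |boolSign b| = 1 := by cases b <;> simp

noncomputable def coin (δ : ℝ) (b : Bool) : ℝ := 1 / 2 + δ * boolSign b

/-- The probability of `x` when its coordinates are independent, each `true` with probability
`1/2 + δ`. -/
noncomputable def coins {ι : Type*} [Fintype ι] (δ : ℝ) (x : ι → Bool) : ℝ :=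
  ∏ j, coin δ (x j)

noncomputable def coinMixture {ι : Type*} [Fintype ι] (δ : ℝ) (x : ι → Bool) : ℝ :=
  (coins δ x + coins (-δ) x) / 2

noncomputable def signMean {N : ℕ} (x : Fin N → Bool) : ℝ :=
  (N : ℝ)⁻¹ * ∑ j, boolSign (x j)

lemma sq_sum_abs_sub_le_sum_sq_div_sub_one {α : Type*} [Fintype α] {P Q : α → ℝ}
    (hP : ∀ a, 0 < P a) (hPsum : ∑ a, P a = 1) (hQsum : ∑ a, Q a = 1) :
    (∑ a, |P a - Q a|) ^ 2 ≤ ∑ a, Q a ^ 2 / P a - 1 := by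
  have hCS := sq_sum_div_le_sum_sq_div univ (fun a => |P a - Q a|) fun a _ => hP a
  rw [hPsum, div_one] at hCS
  have hexpand : ∀ a, |P a - Q a| ^ 2 / P a = P a - 2 * Q a + Q a ^ 2 / P a := fun a => by
    rw [sq_abs]
    field_simp [(hP a).ne']
    ring
  simp only [hexpand, sum_add_distrib, sum_sub_distrib, ← mul_sum, hPsum, hQsum] at hCS
  linarith

lemma two_mul_mul_sub_abs_sub_le {P Q : ℝ} (hP : 0 ≤ P) (hQ : 0 ≤ Q) {d : ℝ} (hd : 0 ≤ d)
    (a : ℝ) : 2 * d * (P - |P - Q|) ≤ P * |d - a| + Q * |-d - a| := by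
  have hsplit : 2 * d ≤ |d - a| + |-d - a| := by
    have h := abs_sub_le d a (-d)
    rwa [sub_neg_eq_add, ← two_mul, abs_of_nonneg (by positivity), abs_sub_comm a] at h
  rcases le_total P Q with h | h
  · rw [abs_of_nonpos (sub_nonpos.2 h)]
    nlinarith [abs_nonneg (d - a), abs_nonneg (-d - a)]
  · rw [abs_of_nonneg (sub_nonneg.2 h)]
    nlinarith [abs_nonneg (d - a), abs_nonneg (-d - a)]

/-- Two laws at total variation distance at most `1/2` cannot be told apart well enough to
estimate which of `±d` is the truth. -/
lemma le_sum_mul_abs_sub_add_mul_abs_neg_sub {α : Type*} [Fintype α] {P Q : α → ℝ}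
    (hP : ∀ a, 0 ≤ P a) (hQ : ∀ a, 0 ≤ Q a) (hPsum : ∑ a, P a = 1)
    (hPQ : ∑ a, |P a - Q a| ≤ 1 / 2) {d : ℝ} (hd : 0 ≤ d) (G : α → ℝ) :
    d ≤ ∑ a, (P a * |d - G a| + Q a * |-d - G a|) :=
  calc d ≤ 2 * d * (∑ a, P a - ∑ a, |P a - Q a|) := by rw [hPsum]; nlinarith
    _ = ∑ a, 2 * d * (P a - |P a - Q a|) := by rw [← sum_sub_distrib, mul_sum]
    _ ≤ _ := sum_le_sum fun a _ => two_mul_mul_sub_abs_sub_le (hP a) (hQ a) hd (G a)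

lemma sum_mul_abs_sub_le_add {α : Type*} [Fintype α] {w : α → ℝ} (hw : ∀ a, 0 ≤ w a)
    (u v c : α → ℝ) :
    ∑ a, w a * |u a - v a| ≤ ∑ a, w a * |c a - u a| + ∑ a, w a * |c a - v a| := by
  rw [← sum_add_distrib]
  refine sum_le_sum fun a _ => ?_
  rw [← mul_add, abs_sub_comm (c a)]
  exact mul_le_mul_of_nonneg_left (abs_sub_le _ _ _) (hw a)

section Coins

variable {ι : Type*} [Fintype ι] {δ : ℝ}

lemma coin_true_add_coin_false (δ : ℝ) : coin δ true + coin δ false = 1 := by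
  simp only [coin, boolSign_true, boolSign_false]; ring

lemma coin_nonneg (hδ : |δ| ≤ 1 / 2) (b : Bool) : 0 ≤ coin δ b := by
  obtain ⟨h₁, h₂⟩ := abs_le.1 hδ
  cases b <;> simp only [coin, boolSign_true, boolSign_false] <;> linarith

lemma coin_pos (hδ : |δ| < 1 / 2) (b : Bool) : 0 < coin δ b := by
  obtain ⟨h₁, h₂⟩ := abs_lt.1 hδ
  cases b <;> simp only [coin, boolSign_true, boolSign_false] <;> linarith

lemma coins_nonneg (hδ : |δ| ≤ 1 / 2) (x : ι → Bool) : 0 ≤ coins δ x :=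
  prod_nonneg fun j _ => coin_nonneg hδ (x j)

lemma coins_pos (hδ : |δ| < 1 / 2) (x : ι → Bool) : 0 < coins δ x :=
  prod_pos fun j _ => coin_pos hδ (x j)

lemma coinMixture_nonneg (hδ : |δ| ≤ 1 / 2) (x : ι → Bool) : 0 ≤ coinMixture δ x :=
  div_nonneg (add_nonneg (coins_nonneg hδ x) (coins_nonneg (by rwa [abs_neg]) x)) zero_le_two

variable [DecidableEq ι]

lemma sum_coins_mul_prod (δ : ℝ) (h : ι → Bool → ℝ) :
    ∑ x : ι → Bool, coins δ x * ∏ j, h j (x j) = ∏ j, ∑ b, coin δ b * h j b := by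
  simp only [coins, ← prod_mul_distrib]
  exact (Fintype.prod_sum fun j b => coin δ b * h j b).symm

lemma sum_coins (δ : ℝ) : ∑ x : ι → Bool, coins δ x = 1 := by
  simpa [coin_true_add_coin_false] using sum_coins_mul_prod (ι := ι) δ fun _ _ => 1

lemma sum_coinMixture (δ : ℝ) : ∑ x : ι → Bool, coinMixture δ x = 1 := by
  simp only [coinMixture, ← sum_div, sum_add_distrib, sum_coins]; norm_num

lemma sum_coins_mul_restrict (p : ι → Prop) [DecidablePred p] (δ : ℝ)
    (G : ({j // p j} → Bool) → ℝ) :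
    ∑ x : ι → Bool, coins δ x * G (fun j => x j) = ∑ y, coins δ y * G y := by
  set e := Equiv.piEquivPiSubtypeProd p fun _ => Bool
  have hsplit : ∀ x : ι → Bool,
      coins δ x * G (fun j => x j) = coins δ (e x).1 * G (e x).1 * coins δ (e x).2 := by
    intro x
    simp only [coins, ← Fintype.prod_subtype_mul_prod_subtype p fun j => coin δ (x j)]
    dsimp [e, Equiv.piEquivPiSubtypeProd]
    ring
  rw [Fintype.sum_equiv e _ (fun yz => coins δ yz.1 * G yz.1 * coins δ yz.2) hsplit,
    Fintype.sum_prod_type]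
  simp only [← mul_sum, sum_coins, mul_one]

lemma sum_sq_coins_neg_div_coins (hδ : |δ| < 1 / 2) :
    ∑ x : ι → Bool, coins (-δ) x ^ 2 / coins δ x
      = ((1 + 12 * δ ^ 2) / (1 - 4 * δ ^ 2)) ^ Fintype.card ι := by
  have hfactor : ∀ x : ι → Bool,
      coins (-δ) x ^ 2 / coins δ x = ∏ j, coin (-δ) (x j) ^ 2 / coin δ (x j) := fun x => by
    rw [coins, coins, prod_div_distrib, prod_pow]
  obtain ⟨h₁, h₂⟩ := abs_lt.1 hδ
  have hsum : ∑ b, coin (-δ) b ^ 2 / coin δ b = (1 + 12 * δ ^ 2) / (1 - 4 * δ ^ 2) := by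
    have : (1 : ℝ) / 2 + δ ≠ 0 := by linarith
    have : (1 : ℝ) / 2 - δ ≠ 0 := by linarith
    have : 1 - 4 * δ ^ 2 ≠ 0 := by nlinarith
    simp only [Fintype.sum_bool, coin, boolSign_true, boolSign_false]
    field_simp
    ring
  simp only [hfactor, ← Fintype.prod_sum fun j b => coin (-δ) b ^ 2 / coin δ b, hsum,
    prod_const, card_univ]

lemma sq_sum_abs_coins_sub_coins_neg_le (hδ : δ ^ 2 ≤ 1 / 8) :
    (∑ x : ι → Bool, |coins δ x - coins (-δ) x|) ^ 2
      ≤ (1 + 32 * δ ^ 2) ^ Fintype.card ι - 1 := by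
  have hδ' : |δ| < 1 / 2 := abs_lt.2 ⟨by nlinarith, by nlinarith⟩
  have hχ : (1 + 12 * δ ^ 2) / (1 - 4 * δ ^ 2) ≤ 1 + 32 * δ ^ 2 := by
    rw [div_le_iff₀ (by nlinarith)]
    nlinarith
  calc (∑ x : ι → Bool, |coins δ x - coins (-δ) x|) ^ 2
      ≤ ∑ x : ι → Bool, coins (-δ) x ^ 2 / coins δ x - 1 :=
        sq_sum_abs_sub_le_sum_sq_div_sub_one (coins_pos hδ') (sum_coins δ) (sum_coins (-δ))
    _ ≤ (1 + 32 * δ ^ 2) ^ Fintype.card ι - 1 := by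
        rw [sum_sq_coins_neg_div_coins hδ']
        gcongr
        exact div_nonneg (by positivity) (by nlinarith)

lemma sum_abs_coins_sub_coins_neg_le_half (hδ : δ ^ 2 ≤ 1 / 8)
    (hcard : 160 * Fintype.card ι * δ ^ 2 ≤ 1) :
    ∑ x : ι → Bool, |coins δ x - coins (-δ) x| ≤ 1 / 2 := by
  have hexp : (1 + 32 * δ ^ 2) ^ Fintype.card ι ≤ 5 / 4 :=
    calc (1 + 32 * δ ^ 2) ^ Fintype.card ι
        ≤ Real.exp (32 * δ ^ 2) ^ Fintype.card ι := by
          gcongr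
          linarith [Real.add_one_le_exp (32 * δ ^ 2)]
      _ = Real.exp (Fintype.card ι * (32 * δ ^ 2)) := (Real.exp_nat_mul _ _).symm
      _ ≤ Real.exp (1 / 5) := Real.exp_le_exp.2 (by linarith)
      _ ≤ 5 / 4 := by
          convert Real.exp_bound_div_one_sub_of_interval (x := 1 / 5) (by norm_num) (by norm_num)
            using 1
          norm_num
  have hsq := sq_sum_abs_coins_sub_coins_neg_le (ι := ι) hδ
  have hnonneg : 0 ≤ ∑ x : ι → Bool, |coins δ x - coins (-δ) x| :=
    sum_nonneg fun x _ => abs_nonneg _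
  nlinarith

/-- Only the signs at the `n` sampled nodes matter, and on them the two product laws are close
in total variation. -/
lemma two_mul_le_sum_coins_mul_abs_sub_comp {n : ℕ} (t : Fin n → ι)
    (G : (Fin n → Bool) → ℝ) (hδ : 0 ≤ δ) (hδ8 : δ ^ 2 ≤ 1 / 8) (hδn : 160 * n * δ ^ 2 ≤ 1) :
    2 * δ ≤ ∑ x : ι → Bool,
      (coins δ x * |2 * δ - G (x ∘ t)| + coins (-δ) x * |-(2 * δ) - G (x ∘ t)|) := by
  have hδ_abs : |δ| ≤ 1 / 2 := abs_le.2 ⟨by nlinarith, by nlinarith⟩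
  have hδ_abs' : |-δ| ≤ 1 / 2 := by rwa [abs_neg]
  have hcard : Fintype.card (Set.range t) ≤ n := by simpa using Fintype.card_range_le t
  have hmarg : ∀ (δ' : ℝ) (F : (Fin n → Bool) → ℝ),
      ∑ x : ι → Bool, coins δ' x * F (x ∘ t)
        = ∑ y : Set.range t → Bool, coins δ' y * F (y ∘ Set.rangeFactorization t) :=
    fun δ' F => by
      convert sum_coins_mul_restrict (· ∈ Set.range t) δ' fun y =>
        F (y ∘ Set.rangeFactorization t)
      rfl
  rw [sum_add_distrib, hmarg δ fun y => |2 * δ - G y|, hmarg (-δ) fun y => |-(2 * δ) - G y|,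
    ← sum_add_distrib]
  refine le_sum_mul_abs_sub_add_mul_abs_neg_sub (coins_nonneg hδ_abs) (coins_nonneg hδ_abs')
    (sum_coins δ) (sum_abs_coins_sub_coins_neg_le_half hδ8 ?_) (by positivity) _
  calc 160 * (Fintype.card (Set.range t) : ℝ) * δ ^ 2 ≤ 160 * n * δ ^ 2 := by gcongr
    _ ≤ 1 := hδn

lemma sum_coins_mul_centered_mul_centered (δ : ℝ) (j k : ι) :
    ∑ x : ι → Bool, coins δ x * ((boolSign (x j) - 2 * δ) * (boolSign (x k) - 2 * δ))
      = if j = k then 1 - 4 * δ ^ 2 else 0 := by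
  set Y : Bool → ℝ := fun b => boolSign b - 2 * δ
  have hY₁ : ∑ b, coin δ b * Y b = 0 := by
    simp only [Y, Fintype.sum_bool, coin, boolSign_true, boolSign_false]; ring
  have hY₂ : ∑ b, coin δ b * (Y b * Y b) = 1 - 4 * δ ^ 2 := by
    simp only [Y, Fintype.sum_bool, coin, boolSign_true, boolSign_false]; ring
  have hprod : ∀ x : ι → Bool, Y (x j) * Y (x k) =
      ∏ l, (if l = j then Y (x l) else 1) * (if l = k then Y (x l) else 1) := fun x => by
    rw [prod_mul_distrib, prod_ite_eq' univ j, prod_ite_eq' univ k]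
    simp
  change ∑ x : ι → Bool, coins δ x * (Y (x j) * Y (x k)) = _
  simp only [hprod]
  rw [sum_coins_mul_prod δ fun l b => (if l = j then Y b else 1) * (if l = k then Y b else 1)]
  split_ifs with hjk
  · subst hjk
    rw [prod_eq_single j (fun l _ hl => by simp [hl, coin_true_add_coin_false])
      (fun h => absurd (mem_univ j) h)]
    simpa using hY₂
  · exact prod_eq_zero (mem_univ j) (by simpa [hjk] using hY₁)

lemma sum_coins_mul_sq_signMean_sub {N : ℕ} (hN : N ≠ 0) (δ : ℝ) :
    ∑ x : Fin N → Bool, coins δ x * (signMean x - 2 * δ) ^ 2 = (1 - 4 * δ ^ 2) / N := by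
  have hN' : (N : ℝ) ≠ 0 := Nat.cast_ne_zero.2 hN
  have hcentered : ∀ x : Fin N → Bool,
      signMean x - 2 * δ = (N : ℝ)⁻¹ * ∑ j, (boolSign (x j) - 2 * δ) := fun x => by
    rw [signMean, sum_sub_distrib, sum_const, card_univ, Fintype.card_fin, nsmul_eq_mul]
    field_simp
  have hexpand : ∀ x : Fin N → Bool, coins δ x * (signMean x - 2 * δ) ^ 2 =
      (N : ℝ)⁻¹ ^ 2 * ∑ j, ∑ k,
        coins δ x * ((boolSign (x j) - 2 * δ) * (boolSign (x k) - 2 * δ)) := fun x => by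
    rw [hcentered, mul_pow, sq (∑ j, _), sum_mul_sum, mul_left_comm]
    simp only [mul_sum]
  rw [sum_congr rfl fun x _ => hexpand x, ← mul_sum, sum_comm,
    sum_congr rfl fun j _ => sum_comm]
  simp only [sum_coins_mul_centered_mul_centered, sum_ite_eq, mem_univ, if_true, sum_const,
    card_univ, Fintype.card_fin, nsmul_eq_mul]
  field_simp

lemma sum_coins_mul_abs_signMean_sub_le {N : ℕ} (hN : N ≠ 0) (hδ : |δ| ≤ 1 / 2) :
    ∑ x : Fin N → Bool, coins δ x * |signMean x - 2 * δ| ≤ √(N : ℝ)⁻¹ := by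
  have hJensen := Real.pow_arith_mean_le_arith_mean_pow (univ : Finset (Fin N → Bool))
    (coins δ) (fun x => |signMean x - 2 * δ|) (fun x _ => coins_nonneg hδ x) (sum_coins δ)
    (fun x _ => abs_nonneg _) 2
  simp only [sq_abs, sum_coins_mul_sq_signMean_sub hN] at hJensen
  refine (le_abs_self _).trans (Real.abs_le_sqrt (hJensen.trans ?_))
  rw [div_eq_mul_inv]
  exact mul_le_of_le_one_left (by positivity) (by nlinarith)

end Coins

theorem half_le_sum_coinMixture_mul_abs_signMean_sub {n N : ℕ} (hn : 1 ≤ n)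
    (t : Fin n → Fin N) (A : (Fin n → Bool) → ℝ) {δ : ℝ} (hδ : 0 ≤ δ)
    (hδn : 160 * n * δ ^ 2 ≤ 1) (hδN : 4 ≤ N * δ ^ 2) :
    δ / 2 ≤ ∑ x : Fin N → Bool, coinMixture δ x * |signMean x - A (x ∘ t)| := by
  have hn' : (1 : ℝ) ≤ n := by exact_mod_cast hn
  have hδ8 : δ ^ 2 ≤ 1 / 8 := by nlinarith
  have hδ_abs : |δ| ≤ 1 / 2 := abs_le.2 ⟨by nlinarith, by nlinarith⟩
  have hδ_abs' : |-δ| ≤ 1 / 2 := by rwa [abs_neg]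
  have hN : N ≠ 0 := by rintro rfl; norm_num at hδN
  have htest := two_mul_le_sum_coins_mul_abs_sub_comp t A hδ hδ8 hδn
  have hfluct : √(N : ℝ)⁻¹ ≤ δ / 2 := by
    have hN' : (0 : ℝ) < N := by positivity
    refine Real.sqrt_le_iff.2 ⟨by positivity, ?_⟩
    rw [inv_le_iff_one_le_mul₀ hN']
    nlinarith
  have hvar_pos := sum_coins_mul_abs_signMean_sub_le hN hδ_abs
  have hvar_neg := sum_coins_mul_abs_signMean_sub_le hN hδ_abs'
  have htri_pos := sum_mul_abs_sub_le_add (coins_nonneg hδ_abs) (fun _ => 2 * δ)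
    (fun x : Fin N → Bool => A (x ∘ t)) signMean
  have htri_neg := sum_mul_abs_sub_le_add (coins_nonneg hδ_abs') (fun _ => -(2 * δ))
    (fun x : Fin N → Bool => A (x ∘ t)) signMean
  simp only [mul_neg] at hvar_neg
  simp only [coinMixture, add_div, add_mul, sum_add_distrib, div_mul_eq_mul_div, ← sum_div]
  rw [sum_add_distrib] at htest
  linarith

lemma lpNorm_const {p : ℝ} (hp : p ≠ 0) {M : ℕ} (hM : M ≠ 0) (c : ℝ) :
    lpNorm p M (fun _ => c) = |c| := by
  rw [lpNorm, sum_const, card_univ, Fintype.card_fin, nsmul_eq_mul, inv_mul_cancel_left₀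
    (Nat.cast_ne_zero.2 hM), one_div, Real.rpow_rpow_inv (abs_nonneg c) hp]

lemma abs_mean_le_lpNorm {p : ℝ} (hp : 1 ≤ p) {M : ℕ} (u : Fin M → ℝ) :
    |(M : ℝ)⁻¹ * ∑ i, u i| ≤ lpNorm p M u := by
  rcases M.eq_zero_or_pos with rfl | hM
  · simp only [univ_eq_empty, sum_empty, mul_zero, abs_zero, lpNorm]
    exact Real.rpow_nonneg le_rfl _
  have hw : ∑ _i : Fin M, (M : ℝ)⁻¹ = 1 := by
    rw [sum_const, card_univ, Fintype.card_fin, nsmul_eq_mul, mul_inv_cancel₀ (by positivity)]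
  calc |(M : ℝ)⁻¹ * ∑ i, u i| ≤ ∑ i, (M : ℝ)⁻¹ * |u i| := by
        rw [mul_sum]
        refine (abs_sum_le_sum_abs _ _).trans_eq (sum_congr rfl fun i _ => ?_)
        rw [abs_mul, abs_of_pos (by positivity)]
    _ ≤ (∑ i, (M : ℝ)⁻¹ * |u i| ^ p) ^ (1 / p) :=
        Real.arith_mean_le_rpow_mean _ _ _ (fun _ _ => by positivity) hw
          (fun i _ => abs_nonneg (u i)) hp
    _ = lpNorm p M u := by rw [lpNorm, mul_sum]

lemma abs_signMean_sub_le_lpNorm {p : ℝ} (hp : 1 ≤ p) {n M N : ℕ} (hM : M ≠ 0)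
    (t : Fin n → Fin N) (ψ : (Fin n → Fin M → ℝ) → Fin M → ℝ) (x : Fin N → Bool) :
    |signMean x - (M : ℝ)⁻¹ * ∑ i, ψ (fun l _ => boolSign (x (t l))) i|
      ≤ lpNorm p M ((N : ℝ)⁻¹ • ∑ j, (fun _ : Fin M => boolSign (x j))
          - ψ (fun l _ => boolSign (x (t l)))) := by
  refine le_of_eq_of_le ?_ (abs_mean_le_lpNorm hp _)
  simp only [Pi.sub_apply, Pi.smul_apply, Finset.sum_apply, smul_eq_mul, sum_sub_distrib,
    sum_const, card_univ, Fintype.card_fin, nsmul_eq_mul, mul_sub, signMean]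
  rw [inv_mul_cancel_left₀ (Nat.cast_ne_zero.2 hM)]

/-- Bakhvalov's averaging principle: a lower bound for the `π`-average error of every
deterministic algorithm bounds the worst-case expected error of the randomized one. -/
lemma le_of_forall_le_sum_mul {α Ω : Type*} [Fintype α] [Fintype Ω] {P : Ω → ℝ}
    {π : α → ℝ} (hP : ∀ ω, 0 ≤ P ω) (hPsum : ∑ ω, P ω = 1) (hπ : ∀ a, 0 ≤ π a)
    (hπsum : ∑ a, π a = 1)
    {e : Ω → α → ℝ} {b c : ℝ} (hb : ∀ a, ∑ ω, P ω * e ω a ≤ b)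
    (hc : ∀ ω, c ≤ ∑ a, π a * e ω a) : c ≤ b :=
  calc c = ∑ ω, P ω * c := by rw [← sum_mul, hPsum, one_mul]
    _ ≤ ∑ ω, P ω * ∑ a, π a * e ω a :=
        sum_le_sum fun ω _ => mul_le_mul_of_nonneg_left (hc ω) (hP ω)
    _ = ∑ a, π a * ∑ ω, P ω * e ω a := by
        simp only [mul_sum]
        rw [sum_comm]
        exact sum_congr rfl fun a _ => sum_congr rfl fun ω _ => by ring
    _ ≤ ∑ a, π a * b := sum_le_sum fun a _ => mul_le_mul_of_nonneg_left (hb a) (hπ a)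
    _ = b := by rw [← sum_mul, hπsum, one_mul]

end MeanLowerBound

open MeanLowerBound in
/-- For every `2 ≤ p < ∞` there are constants `c₀, c₁ > 0` such
that for all `n, M, N` with `1 ≤ n ≤ c₀·min(M,N)`, every randomized algorithm using
`n` function values for computing the mean `S_N` on `B_∞^N(L_p^M)` has worst-case
expected error at least `c₁ · n^(−1/2)`: any upper bound `b` for the expected
errors over the unit ball is at least that much. -/
theorem mean_lp_lower_high_sharp (p : ℝ) (hp : 2 ≤ p) :
    ∃ c₀ c₁ : ℝ, 0 < c₀ ∧ 0 < c₁ ∧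
      ∀ (n M N : ℕ), 1 ≤ n → (n : ℝ) ≤ c₀ * min (M : ℝ) (N : ℝ) →
        ∀ (Ω : Type) [Fintype Ω] (P : Ω → ℝ),
          (∀ ω, 0 ≤ P ω) → (∑ ω, P ω = 1) →
          ∀ (t : Ω → Fin n → Fin N)
            (φ : Ω → (Fin n → (Fin M → ℝ)) → (Fin M → ℝ)) (b : ℝ),
            (∀ f : Fin N → Fin M → ℝ, (∀ j, lpNorm p M (f j) ≤ 1) →
              ∑ ω, P ω *
                  lpNorm p M
                    ((N : ℝ)⁻¹ • ∑ j, f j - φ ω (fun l => f (t ω l))) ≤ b) →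
            c₁ * (n : ℝ) ^ (-(1 / 2 : ℝ)) ≤ b := by
  refine ⟨1 / 640, (√160)⁻¹ / 2, by norm_num, by positivity, ?_⟩
  intro n M N hn hnMN Ω _ P hP hPsum t φ b hb
  have hn' : (1 : ℝ) ≤ n := by exact_mod_cast hn
  have hM : 640 * (n : ℝ) ≤ M := by linarith [min_le_left (M : ℝ) N]
  have hN : 640 * (n : ℝ) ≤ N := by linarith [min_le_right (M : ℝ) N]
  have hM0 : M ≠ 0 := by rintro rfl; norm_num at hM; linarith
  set δ := (√(160 * n))⁻¹ with hδ
  have hδ0 : 0 ≤ δ := by positivity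
  have hδ2 : δ ^ 2 = (160 * (n : ℝ))⁻¹ := by rw [hδ, inv_pow, Real.sq_sqrt (by positivity)]
  have hδ_abs : |δ| ≤ 1 / 2 := by
    have : δ ^ 2 ≤ 1 / 4 := by rw [hδ2, inv_le_comm₀ (by positivity) (by norm_num)]; linarith
    exact abs_le.2 ⟨by nlinarith, by nlinarith⟩
  have hc₁ : (√160)⁻¹ / 2 * (n : ℝ) ^ (-(1 / 2 : ℝ)) = δ / 2 := by
    rw [Real.rpow_neg (by positivity), ← Real.sqrt_eq_rpow, hδ, Real.sqrt_mul (by norm_num),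
      mul_inv]
    ring
  rw [hc₁]
  refine le_of_forall_le_sum_mul hP hPsum (coinMixture_nonneg hδ_abs) (sum_coinMixture δ)
    (fun x => hb (fun j _ => boolSign (x j))
      fun j => (lpNorm_const (by linarith) hM0 _).trans_le (abs_boolSign (x j)).le)
    fun ω => ?_
  calc δ / 2 ≤ ∑ x : Fin N → Bool, coinMixture δ x *
        |signMean x - (M : ℝ)⁻¹ * ∑ i, φ ω (fun l _ => boolSign (x (t ω l))) i| :=
        half_le_sum_coinMixture_mul_abs_signMean_sub hn (t ω)
          (fun y => (M : ℝ)⁻¹ * ∑ i, φ ω (fun l _ => boolSign (y l)) i) hδ0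
          (by rw [hδ2, mul_inv_cancel₀ (by positivity)]) (by rw [hδ2]; field_simp; linarith)
    _ ≤ _ := Finset.sum_le_sum fun x _ => mul_le_mul_of_nonneg_left
        (abs_signMean_sub_le_lpNorm (by linarith) hM0 (t ω) (φ ω) x)
        (coinMixture_nonneg hδ_abs x)
end

section
/- For every p with 1 ≤ p < 2 there are constants c_0, c_1 > 0 such that for all integers n, M, N with 1 ≤ n ≤ c_0·min(M,N), every randomized algorithm using n function values for computing the mean S_N on B_∞^N(L_p^M) (with outputs in L_p^M, error measured in the L_p^M norm) has worst-case expected error at least c_1 · n^{−1+1/p}. -/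
open Finset

section LpNorm

variable {p : ℝ} {M : ℕ}

lemma lpNorm_eq_mul (x : Fin M → ℝ) :
    lpNorm p M x = (M : ℝ)⁻¹ ^ (1 / p) * (∑ i, |x i| ^ p) ^ (1 / p) :=
  Real.mul_rpow (by positivity) (by positivity)

lemma lpNorm_add_le (hp : 1 ≤ p) (x y : Fin M → ℝ) :
    lpNorm p M (x + y) ≤ lpNorm p M x + lpNorm p M y := by
  simp only [lpNorm_eq_mul, ← mul_add]
  exact mul_le_mul_of_nonneg_left (Real.Lp_add_le univ x y hp) (by positivity)

lemma lpNorm_sub_le_add (hp : 1 ≤ p) (x y z : Fin M → ℝ) :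
    lpNorm p M (x - y) ≤ lpNorm p M (x - z) + lpNorm p M (y - z) := by
  have hneg : lpNorm p M (z - y) = lpNorm p M (y - z) := by
    simp only [lpNorm, Pi.sub_apply, abs_sub_comm]
  simpa [hneg] using lpNorm_add_le hp (x - z) (z - y)

lemma lpNorm_single (hp : 0 < p) (i : Fin M) (a : ℝ) :
    lpNorm p M (Pi.single i a) = (M : ℝ)⁻¹ ^ (1 / p) * |a| := by
  have hsum : ∑ k, |(Pi.single i a : Fin M → ℝ) k| ^ p = |a| ^ p := by
    rw [Finset.sum_eq_single i (fun k _ hk => by simp [hk, Real.zero_rpow hp.ne']) (by simp)]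
    simp
  rw [lpNorm_eq_mul, hsum, one_div, Real.rpow_rpow_inv (abs_nonneg a) hp.ne']

lemma le_lpNorm_of_le_abs (hp : 0 < p) {x : Fin M → ℝ} {S : Finset (Fin M)} {a : ℝ}
    (ha : 0 ≤ a) (hS : ∀ i ∈ S, a ≤ |x i|) :
    ((#S : ℝ) / M) ^ (1 / p) * a ≤ lpNorm p M x := by
  have hsum : (#S : ℝ) * a ^ p ≤ ∑ i, |x i| ^ p := calc
    (#S : ℝ) * a ^ p = ∑ _i ∈ S, a ^ p := by rw [sum_const, nsmul_eq_mul]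
    _ ≤ ∑ i ∈ S, |x i| ^ p := sum_le_sum fun i hi => by gcongr; exact hS i hi
    _ ≤ ∑ i, |x i| ^ p := sum_le_sum_of_subset_of_nonneg (subset_univ S) fun _ _ _ => by positivity
  calc ((#S : ℝ) / M) ^ (1 / p) * a
      = ((M : ℝ)⁻¹ * (#S * a ^ p)) ^ (1 / p) := by
        rw [← mul_assoc, inv_mul_eq_div, Real.mul_rpow (by positivity) (by positivity), one_div,
          Real.rpow_rpow_inv ha hp.ne']
    _ ≤ lpNorm p M x := by unfold lpNorm; gcongr

end LpNorm

/-- Bakhvalov's averaging argument; `π ω` pairs inputs that the outcome `ω` cannot tell apart. -/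
theorem half_le_of_le_add_perm {Ω α : Type*} [Fintype Ω] [Fintype α] [Nonempty α]
    (P : Ω → ℝ) (hP : ∀ ω, 0 ≤ P ω) (hP1 : ∑ ω, P ω = 1) (π : Ω → Equiv.Perm α)
    (e : α → Ω → ℝ) {L b : ℝ} (hpair : ∀ s ω, L ≤ e s ω + e (π ω s) ω)
    (hb : ∀ s, ∑ ω, P ω * e s ω ≤ b) : L / 2 ≤ b := by
  have hcard : (0 : ℝ) < Fintype.card α := by exact_mod_cast Fintype.card_pos
  have hω : ∀ ω, Fintype.card α * L ≤ 2 * ∑ s, e s ω := fun ω => calc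
    Fintype.card α * L = ∑ _s : α, L := by simp
    _ ≤ ∑ s, (e s ω + e (π ω s) ω) := sum_le_sum fun s _ => hpair s ω
    _ = 2 * ∑ s, e s ω := by rw [sum_add_distrib, Equiv.sum_comp (π ω) (e · ω)]; ring
  have : Fintype.card α * (L / 2) ≤ Fintype.card α * b := calc
    Fintype.card α * (L / 2) = ∑ ω, P ω * (Fintype.card α * L / 2) := by
      rw [← sum_mul, hP1]; ring
    _ ≤ ∑ ω, P ω * ∑ s, e s ω := sum_le_sum fun ω _ =>
      mul_le_mul_of_nonneg_left (by linarith [hω ω]) (hP ω)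
    _ = ∑ s, ∑ ω, P ω * e s ω := by simp only [mul_sum]; exact sum_comm
    _ ≤ ∑ _s : α, b := sum_le_sum fun s _ => hb s
    _ = Fintype.card α * b := by simp
  exact le_of_mul_le_mul_left this hcard

lemma le_two_mul_mul_count_modEq {K N : ℕ} (hK : 0 < K) (hKN : K ≤ N) (v : ℕ) :
    N ≤ 2 * K * Nat.count (· ≡ v [MOD K]) N := by
  have hN := Nat.lt_div_mul_add (a := N) hK
  have hq : 1 ≤ N / K := Nat.div_pos hKN hK
  have hcount : N / K ≤ Nat.count (· ≡ v [MOD K]) N := by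
    rw [Nat.count_modEq_card N hK]; exact Nat.le_add_right _ _
  nlinarith

lemma abs_units_cast (u : ℤˣ) : |((u : ℤ) : ℝ)| = 1 := by
  rcases Int.units_eq_one_or u with rfl | rfl <;> simp

section SignedBumps

variable {K M N : ℕ}

def flipOutside (T : Finset (Fin K)) : Fin K → ℤˣ := fun q => if q ∈ T then 1 else -1

lemma mul_flipOutside_apply_of_mem (s : Fin K → ℤˣ) {T : Finset (Fin K)} {q : Fin K}
    (hq : q ∈ T) : (s * flipOutside T) q = s q := by
  simp [flipOutside, hq]

lemma mul_flipOutside_apply_of_notMem (s : Fin K → ℤˣ) {T : Finset (Fin K)} {q : Fin K}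
    (hq : q ∉ T) : (s * flipOutside T) q = -s q := by
  simp [flipOutside, hq]

variable [NeZero K]

/-- `j ↦ s (j mod K) · M^(1/p) · e_(j mod K)`; the height `M^(1/p)` gives every value unit norm
in `L_p^M`. -/
noncomputable def signedBumps (p : ℝ) (hKM : K ≤ M) (s : Fin K → ℤˣ) (j : Fin N) :
    Fin M → ℝ :=
  Pi.single (Fin.castLE hKM (Fin.ofNat K j)) (((s (Fin.ofNat K j) : ℤ) : ℝ) * (M : ℝ) ^ (1 / p))

lemma lpNorm_signedBumps {p : ℝ} (hp : 0 < p) (hKM : K ≤ M) (s : Fin K → ℤˣ) (j : Fin N) :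
    lpNorm p M (signedBumps p hKM s j) = 1 := by
  have hM : (0 : ℝ) < M := by exact_mod_cast (NeZero.pos K).trans_le hKM
  rw [signedBumps, lpNorm_single hp, abs_mul, abs_units_cast, one_mul,
    abs_of_nonneg (by positivity), ← Real.mul_rpow (by positivity) hM.le, inv_mul_cancel₀ hM.ne',
    Real.one_rpow]

lemma signedBumps_congr {p : ℝ} (hKM : K ≤ M) {s s' : Fin K → ℤˣ} {j : Fin N}
    (h : s (Fin.ofNat K j) = s' (Fin.ofNat K j)) :
    signedBumps p hKM s j = signedBumps p hKM s' j := by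
  rw [signedBumps, signedBumps, h]

lemma sum_signedBumps_apply_castLE (p : ℝ) (hKM : K ≤ M) (s : Fin K → ℤˣ) (q : Fin K) :
    (∑ j : Fin N, signedBumps p hKM s j) (Fin.castLE hKM q) =
      Nat.count (· ≡ q [MOD K]) N * (((s q : ℤ) : ℝ) * (M : ℝ) ^ (1 / p)) := by
  have hfiber : ∀ x : ℕ, Fin.ofNat K x = q ↔ x ≡ q [MOD K] := fun x => by
    rw [Fin.ext_iff, Fin.val_ofNat, Nat.ModEq, Nat.mod_eq_of_lt q.isLt]
  simp only [Finset.sum_apply, signedBumps, Pi.single_apply, Fin.castLE_inj, eq_comm (a := q)]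
  rw [Fin.sum_univ_eq_sum_range (fun x => if Fin.ofNat K x = q then
      ((s (Fin.ofNat K x) : ℤ) : ℝ) * (M : ℝ) ^ (1 / p) else 0), ← sum_filter,
    sum_congr rfl fun x hx => by rw [(mem_filter.1 hx).2], sum_const, nsmul_eq_mul,
    Nat.count_eq_card_filter_range]
  simp only [hfiber]

/-- Each residue class mod `K` holds at least `N / (2K)` indices, so flipping the signs outside
`T` moves the mean by at least `M^(1/p) / K` at each of those `#Tᶜ` coordinates. -/
lemma le_lpNorm_mean_signedBumps_sub {p : ℝ} (hp : 0 < p) (hKM : K ≤ M) (hKN : K ≤ N)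
    (s : Fin K → ℤˣ) (T : Finset (Fin K)) :
    (#Tᶜ : ℝ) ^ (1 / p) / K ≤ lpNorm p M ((N : ℝ)⁻¹ • ∑ j : Fin N, signedBumps p hKM s j -
      (N : ℝ)⁻¹ • ∑ j : Fin N, signedBumps p hKM (s * flipOutside T) j) := by
  have hK : (0 : ℝ) < K := by exact_mod_cast NeZero.pos K
  have hM : (0 : ℝ) < M := hK.trans_le (by exact_mod_cast hKM)
  have hN : (0 : ℝ) < N := hK.trans_le (by exact_mod_cast hKN)
  have hbump : ∀ q ∉ T, (M : ℝ) ^ (1 / p) / K ≤ |((N : ℝ)⁻¹ • ∑ j : Fin N, signedBumps p hKM s j -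
      (N : ℝ)⁻¹ • ∑ j : Fin N, signedBumps p hKM (s * flipOutside T) j) (Fin.castLE hKM q)| := by
    intro q hq
    have hc : (N : ℝ) ≤ 2 * K * Nat.count (· ≡ q [MOD K]) N := by
      exact_mod_cast le_two_mul_mul_count_modEq (NeZero.pos K) hKN q
    have hu := abs_units_cast (s q)
    set c : ℝ := (Nat.count (· ≡ q [MOD K]) N : ℝ)
    set u : ℝ := ((s q : ℤ) : ℝ)
    simp only [Pi.sub_apply, Pi.smul_apply, smul_eq_mul, sum_signedBumps_apply_castLE,
      mul_flipOutside_apply_of_notMem s hq, Units.val_neg, Int.cast_neg]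
    rw [show (N : ℝ)⁻¹ * (c * (u * M ^ (1 / p))) - (N : ℝ)⁻¹ * (c * (-u * M ^ (1 / p))) =
        u * (2 * c * M ^ (1 / p) / N) by ring, abs_mul, hu, one_mul,
      abs_of_nonneg (by positivity), div_le_div_iff₀ hK hN]
    nlinarith [show (0 : ℝ) < (M : ℝ) ^ (1 / p) by positivity]
  have := le_lpNorm_of_le_abs hp (S := Tᶜ.map (Fin.castLEEmb hKM)) (a := M ^ (1 / p) / K)
    (by positivity)
    fun i hi => by
      obtain ⟨q, hq, rfl⟩ := mem_map.1 hi
      exact hbump q (mem_compl.1 hq)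
  rw [card_map] at this
  convert this using 1
  rw [Real.div_rpow (by positivity) hM.le]
  field_simp

end SignedBumps

theorem mean_lp_lower_low_sharp_general (p : ℝ) (hp1 : 1 ≤ p) :
    ∃ c₀ c₁ : ℝ, 0 < c₀ ∧ 0 < c₁ ∧
      ∀ (n M N : ℕ), 1 ≤ n → (n : ℝ) ≤ c₀ * min (M : ℝ) (N : ℝ) →
        ∀ (Ω : Type) [Fintype Ω] (P : Ω → ℝ),
          (∀ ω, 0 ≤ P ω) → (∑ ω, P ω = 1) →
          ∀ (t : Ω → Fin n → Fin N)
            (φ : Ω → (Fin n → (Fin M → ℝ)) → (Fin M → ℝ)) (b : ℝ),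
            (∀ f : Fin N → Fin M → ℝ, (∀ j, lpNorm p M (f j) ≤ 1) →
              ∑ ω, P ω *
                  lpNorm p M
                    ((N : ℝ)⁻¹ • ∑ j, f j - φ ω (fun l => f (t ω l))) ≤ b) →
            c₁ * (n : ℝ) ^ (-1 + 1 / p) ≤ b := by
  have hp : 0 < p := one_pos.trans_le hp1
  refine ⟨1 / 2, 1 / 4, by norm_num, by norm_num, ?_⟩
  intro n M N hn hnMN Ω _ P hP hP1 t φ b hb
  have : NeZero (2 * n) := ⟨by omega⟩
  have hKM : 2 * n ≤ M := by
    exact_mod_cast (by push_cast; linarith [min_le_left (M : ℝ) N] : ((2 * n : ℕ) : ℝ) ≤ M)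
  have hKN : 2 * n ≤ N := by
    exact_mod_cast (by push_cast; linarith [min_le_right (M : ℝ) N] : ((2 * n : ℕ) : ℝ) ≤ N)
  let T (ω : Ω) : Finset (Fin (2 * n)) := univ.image fun l => Fin.ofNat (2 * n) (t ω l)
  let err (s : Fin (2 * n) → ℤˣ) (ω : Ω) : ℝ := lpNorm p M
    ((N : ℝ)⁻¹ • ∑ j : Fin N, signedBumps p hKM s j - φ ω fun l => signedBumps p hKM s (t ω l))
  have hpair (s ω) : 1 / 2 * (n : ℝ) ^ (-1 + 1 / p) ≤
      err s ω + err (s * flipOutside (T ω)) ω := by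
    have hsamples : (fun l => signedBumps p hKM (s * flipOutside (T ω)) (t ω l)) =
        fun l => signedBumps p hKM s (t ω l) := funext fun l =>
      signedBumps_congr hKM (mul_flipOutside_apply_of_mem s (mem_image_of_mem _ (mem_univ l)))
    have hunseen : n ≤ #(T ω)ᶜ := by
      have : #(T ω) ≤ n := card_image_le.trans (by simp)
      rw [card_compl, Fintype.card_fin]; omega
    calc 1 / 2 * (n : ℝ) ^ (-1 + 1 / p) = (n : ℝ) ^ (1 / p) / (2 * n : ℕ) := by
          have hn' : (0 : ℝ) < n := by exact_mod_cast hn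
          rw [Real.rpow_add hn', Real.rpow_neg_one]; push_cast; field_simp
      _ ≤ (#(T ω)ᶜ : ℝ) ^ (1 / p) / (2 * n : ℕ) := by gcongr
      _ ≤ _ := le_lpNorm_mean_signedBumps_sub hp hKM hKN s (T ω)
      _ ≤ err s ω + err (s * flipOutside (T ω)) ω := by
          simp only [err, hsamples]; exact lpNorm_sub_le_add hp1 _ _ _
  have := half_le_of_le_add_perm P hP hP1 (fun ω => Equiv.mulRight (flipOutside (T ω))) err hpair
    fun s => hb _ fun j => (lpNorm_signedBumps hp hKM s j).le
  linarith

/-- For every `1 ≤ p < 2` there are constants `c₀, c₁ > 0` such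
that for all `n, M, N` with `1 ≤ n ≤ c₀·min(M,N)`, every randomized algorithm using
`n` function values for computing the mean `S_N` on `B_∞^N(L_p^M)` has worst-case
expected error at least `c₁ · n^(−1+1/p)`: any upper bound `b` for the expected
errors over the unit ball is at least that much. -/
theorem mean_lp_lower_low_sharp (p : ℝ) (hp1 : 1 ≤ p) (hp2 : p < 2) :
    ∃ c₀ c₁ : ℝ, 0 < c₀ ∧ 0 < c₁ ∧
      ∀ (n M N : ℕ), 1 ≤ n → (n : ℝ) ≤ c₀ * min (M : ℝ) (N : ℝ) →
        ∀ (Ω : Type) [Fintype Ω] (P : Ω → ℝ),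
          (∀ ω, 0 ≤ P ω) → (∑ ω, P ω = 1) →
          ∀ (t : Ω → Fin n → Fin N)
            (φ : Ω → (Fin n → (Fin M → ℝ)) → (Fin M → ℝ)) (b : ℝ),
            (∀ f : Fin N → Fin M → ℝ, (∀ j, lpNorm p M (f j) ≤ 1) →
              ∑ ω, P ω *
                  lpNorm p M
                    ((N : ℝ)⁻¹ • ∑ j, f j - φ ω (fun l => f (t ω l))) ≤ b) →
            c₁ * (n : ℝ) ^ (-1 + 1 / p) ≤ b :=
  mean_lp_lower_low_sharp_general p hp1
end
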